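/- For any path P_n of order n ≥ 4, γ_tc(M(P_n)) = 2n − 4. -/

import Mathlib

open SimpleGraph

/-- The middle graph `M(G)`: vertices are `V(G) ⊕ E(G)`; an edge-vertex is adjacent to
another edge-vertex iff the edges are distinct and share an endpoint, and a vertex is
adjacent to an edge iff it is incident to it. -/
def middleGraph {V : Type*} (G : SimpleGraph V) : SimpleGraph (V ⊕ G.edgeSet) where
  Adj x y :=
    match x, y with
    | Sum.inl _, Sum.inl _ => False
    | Sum.inl v, Sum.inr e => v ∈ (e : Sym2 V)
    | Sum.inr e, Sum.inl v => v ∈ (e : Sym2 V)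
    | Sum.inr e, Sum.inr f => e ≠ f ∧ ∃ v, v ∈ (e : Sym2 V) ∧ v ∈ (f : Sym2 V)
  symm := by
    constructor
    rintro (v|e) (w|f) h
    · exact h
    · exact h
    · exact h
    · exact ⟨h.1.symm, h.2.imp fun v hv => ⟨hv.2, hv.1⟩⟩
  loopless := by
    constructor
    rintro (v|e) h
    · exact h
    · exact h.1 rfl

/-- `D` is a total dominating set of `G`: every vertex has a neighbour in `D`. -/
def IsTotalDomSet {V : Type*} (G : SimpleGraph V) (D : Set V) : Prop :=
  ∀ v : V, ∃ u ∈ D, G.Adj v u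

/-- `D` is a total outer-connected dominating set of `G`: it is total dominating and
the subgraph induced on the complement of `D` is connected. -/
def IsTOCDomSet {V : Type*} (G : SimpleGraph V) (D : Set V) : Prop :=
  IsTotalDomSet G D ∧ (G.induce Dᶜ).Connected

/-- The total domination number `γₜ(G)`. -/
noncomputable def totalDomNum {V : Type*} (G : SimpleGraph V) : ℕ :=
  sInf {k | ∃ D : Set V, IsTotalDomSet G D ∧ D.ncard = k}

/-- The total outer-connected domination number `γ_tc(G)`. -/
noncomputable def tocDomNum {V : Type*} (G : SimpleGraph V) : ℕ :=
  sInf {k | ∃ D : Set V, IsTOCDomSet G D ∧ D.ncard = k}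

/-- The set of leaves (vertices of degree 1) of `G`. -/
def leafSet {V : Type*} (G : SimpleGraph V) : Set V :=
  {v | ∃ u, G.neighborSet v = {u}}

/-- The wheel graph with hub `none` and rim cycle on `Fin n`. -/
def wheelGraph (n : ℕ) : SimpleGraph (Option (Fin n)) where
  Adj x y :=
    match x, y with
    | none, none => False
    | none, some _ => True
    | some _, none => True
    | some i, some j => (SimpleGraph.cycleGraph n).Adj i j
  symm := by
    constructor
    rintro (_|i) (_|j) h
    · exact h
    · exact h
    · exact h
    · exact (SimpleGraph.cycleGraph n).symm.symm _ _ h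
  loopless := by
    constructor
    rintro (_|i) h
    · exact h
    · exact (SimpleGraph.cycleGraph n).loopless.irrefl i h

/-- The corona `G ∘ K₁`: to each vertex `a` of `G` (copy `Sum.inl a`) a pendant
vertex `Sum.inr a` is attached. -/
def corona {V : Type*} (G : SimpleGraph V) : SimpleGraph (V ⊕ V) where
  Adj x y :=
    match x, y with
    | Sum.inl a, Sum.inl b => G.Adj a b
    | Sum.inl a, Sum.inr b => a = b
    | Sum.inr a, Sum.inl b => a = b
    | Sum.inr _, Sum.inr _ => False
  symm := by
    constructor
    rintro (a|a) (b|b) h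
    · exact G.symm.symm _ _ h
    · exact h.symm
    · exact h.symm
    · exact h
  loopless := by
    constructor
    rintro (a|a) h
    · exact G.loopless.irrefl a h
    · exact h

/-- The 2-corona `G ∘ P₂`: to each vertex `a` of `G` (copy `Sum.inl a`) a path
`Sum.inl a — Sum.inr (Sum.inl a) — Sum.inr (Sum.inr a)` of length 2 is attached. -/
def corona2 {V : Type*} (G : SimpleGraph V) : SimpleGraph (V ⊕ V ⊕ V) where
  Adj x y :=
    match x, y with
    | Sum.inl a, Sum.inl b => G.Adj a b
    | Sum.inl a, Sum.inr (Sum.inl b) => a = b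
    | Sum.inr (Sum.inl a), Sum.inl b => a = b
    | Sum.inr (Sum.inl a), Sum.inr (Sum.inr b) => a = b
    | Sum.inr (Sum.inr a), Sum.inr (Sum.inl b) => a = b
    | _, _ => False
  symm := by
    constructor
    rintro (a|a|a) (b|b|b) h <;> first | exact G.symm h | exact h.symm | exact h
  loopless := by
    constructor
    rintro (a|a|a) h
    · exact G.loopless.irrefl a h
    · exact h
    · exact h

/-- The spider `S_{1,n,n}`: hub `none`, middle vertices `some (.inl i)`,
leaves `some (.inr i)`; the star `K_{1,n}` with every edge subdivided once. -/
def spiderGraph (n : ℕ) : SimpleGraph (Option (Fin n ⊕ Fin n)) where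
  Adj x y :=
    match x, y with
    | none, some (Sum.inl _) => True
    | some (Sum.inl _), none => True
    | some (Sum.inl i), some (Sum.inr j) => i = j
    | some (Sum.inr i), some (Sum.inl j) => i = j
    | _, _ => False
  symm := by
    constructor
    rintro (_|i|i) (_|j|j) h <;> first | exact h.symm | exact h
  loopless := by
    constructor
    rintro (_|i|i) h <;> exact h

/-- The friendship graph `Fₙ`: `n` triangles sharing the common vertex `none`. -/
def friendshipGraph (n : ℕ) : SimpleGraph (Option (Fin n × Fin 2)) where
  Adj x y :=
    match x, y with
    | none, some _ => True
    | some _, none => True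
    | some (i, a), some (j, b) => i = j ∧ a ≠ b
    | none, none => False
  symm := by
    constructor
    rintro (_|⟨i,a⟩) (_|⟨j,b⟩) h <;> first | exact ⟨h.1.symm, h.2.symm⟩ | exact h
  loopless := by
    constructor
    rintro (_|⟨i,a⟩) h
    · exact h
    · exact h.2 rfl

/-
In `M(G)` the vertices of `G` are pairwise non-adjacent and a vertex `w` sees only
the edges at `w`. If `G` has maximum degree at most two, total domination of `w` therefore puts
into `D` every edge at `w` other than a given edge `e ∉ D`. So an edge `uv` outside `D` has no
neighbour outside `D` except its endpoints, which in turn have no neighbour outside `D` other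
than `uv`: the connected graph `M(G) - D` lies inside `{u, uv, v}`; if it contains no edge it
has at most one vertex. Conversely, removing an edge `uv` together with its endpoints leaves a
total outer-connected dominating set as soon as every vertex lies on another edge, which holds
for every interior edge of a path. Hence `γ_tc(M(P_n)) = |V(M(P_n))| - 3 = (2n - 1) - 3`.
-/

namespace SimpleGraph

theorem subset_of_induce_preconnected {W : Type*} {H : SimpleGraph W} {C S : Set W}
    (hC : (H.induce C).Preconnected) {x : W} (hxC : x ∈ C) (hxS : x ∈ S)
    (hS : ∀ a ∈ S, ∀ b ∈ C, H.Adj a b → b ∈ S) : C ⊆ S := by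
  suffices walk : ∀ (a b : C), (H.induce C).Walk a b → (a : W) ∈ S → (b : W) ∈ S from
    fun y hy => walk ⟨x, hxC⟩ ⟨y, hy⟩ (hC _ _).some hxS
  intro a b p
  induction p with
  | nil => exact id
  | cons hadj _ ih => exact fun ha => ih (hS _ ha _ (Subtype.prop _) hadj)

theorem subsingleton_of_induce_preconnected {W : Type*} {H : SimpleGraph W} {C : Set W}
    (hC : (H.induce C).Preconnected) (hC_indep : ∀ a ∈ C, ∀ b ∈ C, ¬ H.Adj a b) :
    C.Subsingleton := by
  intro x hx y hy
  refine (subset_of_induce_preconnected hC hx (Set.mem_singleton x) ?_ hy).symm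
  rintro a rfl b hb hab
  exact absurd hab (hC_indep a hx b hb)

variable {V : Type*} [Finite V] {G : SimpleGraph V} {w : V}

theorem eq_or_eq_or_eq_of_ncard_neighborSet_le_two (hw : (G.neighborSet w).ncard ≤ 2)
    {a b c : V} (ha : G.Adj w a) (hb : G.Adj w b) (hc : G.Adj w c) : a = b ∨ a = c ∨ b = c := by
  by_contra! h
  have : 2 < (G.neighborSet w).ncard :=
    (Set.two_lt_ncard_iff (Set.toFinite _)).2 ⟨a, b, c, ha, hb, hc, h⟩
  omega

theorem edge_eq_or_eq_or_eq_of_ncard_neighborSet_le_two (hw : (G.neighborSet w).ncard ≤ 2)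
    {e f g : G.edgeSet} (he : w ∈ (e : Sym2 V)) (hf : w ∈ (f : Sym2 V))
    (hg : w ∈ (g : Sym2 V)) : e = f ∨ e = g ∨ f = g := by
  obtain ⟨e, heG⟩ := e
  obtain ⟨f, hfG⟩ := f
  obtain ⟨g, hgG⟩ := g
  obtain ⟨a, rfl⟩ := Sym2.mem_iff_exists.1 he
  obtain ⟨b, rfl⟩ := Sym2.mem_iff_exists.1 hf
  obtain ⟨c, rfl⟩ := Sym2.mem_iff_exists.1 hg
  simp only [Subtype.mk.injEq, Sym2.congr_right]
  exact eq_or_eq_or_eq_of_ncard_neighborSet_le_two hw heG hfG hgG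

end SimpleGraph

section MiddleGraph

variable {V : Type*} {G : SimpleGraph V}

@[simp] theorem middleGraph_adj_inl_inl (v w : V) :
    ¬ (middleGraph G).Adj (Sum.inl v) (Sum.inl w) := id

@[simp] theorem middleGraph_adj_inl_inr (v : V) (e : G.edgeSet) :
    (middleGraph G).Adj (Sum.inl v) (Sum.inr e) ↔ v ∈ (e : Sym2 V) := Iff.rfl

@[simp] theorem middleGraph_adj_inr_inl (e : G.edgeSet) (v : V) :
    (middleGraph G).Adj (Sum.inr e) (Sum.inl v) ↔ v ∈ (e : Sym2 V) := Iff.rfl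

def subdividedEdge {u v : V} (h : G.Adj u v) : Set (V ⊕ G.edgeSet) :=
  {Sum.inl u, Sum.inl v, Sum.inr ⟨s(u, v), h⟩}

theorem ncard_subdividedEdge {u v : V} (h : G.Adj u v) : (subdividedEdge h).ncard = 3 := by
  rw [subdividedEdge, Set.ncard_eq_three]
  exact ⟨_, _, _, by simpa using h.ne, by simp, by simp, rfl⟩

theorem induce_subdividedEdge_connected {u v : V} (h : G.Adj u v) :
    ((middleGraph G).induce (subdividedEdge h)).Connected := by
  have hc : Sum.inr ⟨s(u, v), h⟩ ∈ subdividedEdge h := by simp [subdividedEdge]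
  have reach : ∀ x : subdividedEdge h, ((middleGraph G).induce _).Reachable x ⟨_, hc⟩ := by
    rintro ⟨x, hx⟩
    simp only [subdividedEdge, Set.mem_insert_iff, Set.mem_singleton_iff] at hx
    rcases hx with rfl | rfl | rfl
    · exact Adj.reachable (by simp)
    · exact Adj.reachable (by simp)
    · rfl
  exact (connected_iff _).2 ⟨fun x y => (reach x).trans (reach y).symm, ⟨⟨_, hc⟩⟩⟩

theorem IsTotalDomSet.exists_inr_mem_incident {D : Set (V ⊕ G.edgeSet)}
    (hD : IsTotalDomSet (middleGraph G) D) (w : V) :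
    ∃ e : G.edgeSet, Sum.inr e ∈ D ∧ w ∈ (e : Sym2 V) := by
  obtain ⟨_ | e, he, hadj⟩ := hD (Sum.inl w)
  · exact hadj.elim
  · exact ⟨e, he, hadj⟩

theorem IsTotalDomSet.inr_mem_of_inr_notMem [Finite V]
    (hdeg : ∀ w, (G.neighborSet w).ncard ≤ 2) {D : Set (V ⊕ G.edgeSet)}
    (hD : IsTotalDomSet (middleGraph G) D) {e f : G.edgeSet} (he : Sum.inr e ∉ D)
    (hef : e ≠ f) {w : V} (hwe : w ∈ (e : Sym2 V)) (hwf : w ∈ (f : Sym2 V)) : Sum.inr f ∈ D := by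
  obtain ⟨g, hg, hwg⟩ := hD.exists_inr_mem_incident w
  rcases edge_eq_or_eq_or_eq_of_ncard_neighborSet_le_two (hdeg w) hwe hwf hwg with h | h | h
  · exact absurd h hef
  · exact absurd (h ▸ hg) he
  · exact h ▸ hg

theorem IsTOCDomSet.compl_subset_subdividedEdge [Finite V]
    (hdeg : ∀ w, (G.neighborSet w).ncard ≤ 2) {D : Set (V ⊕ G.edgeSet)}
    (hD : IsTOCDomSet (middleGraph G) D) {u v : V} (h : G.Adj u v)
    (he : Sum.inr ⟨s(u, v), h⟩ ∉ D) : Dᶜ ⊆ subdividedEdge h := by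
  refine subset_of_induce_preconnected hD.2.preconnected he (by simp [subdividedEdge]) ?_
  intro a ha b hb hab
  simp only [subdividedEdge, Set.mem_insert_iff, Set.mem_singleton_iff] at ha
  rcases b with w | f
  · rcases ha with rfl | rfl | rfl
    iterate 2 exact absurd hab (middleGraph_adj_inl_inl _ _)
    simpa [subdividedEdge] using hab
  obtain ⟨w, hwe, hwf⟩ : ∃ w ∈ s(u, v), w ∈ (f : Sym2 V) := by
    rcases ha with rfl | rfl | rfl
    · exact ⟨u, Sym2.mem_mk_left u v, hab⟩
    · exact ⟨v, Sym2.mem_mk_right u v, hab⟩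
    · exact hab.2
  by_cases hfe : ⟨s(u, v), h⟩ = f
  · simp [subdividedEdge, ← hfe]
  · exact absurd (hD.1.inr_mem_of_inr_notMem hdeg he hfe hwe hwf) hb

theorem IsTOCDomSet.ncard_compl_le_three [Finite V] (hdeg : ∀ w, (G.neighborSet w).ncard ≤ 2)
    {D : Set (V ⊕ G.edgeSet)} (hD : IsTOCDomSet (middleGraph G) D) : Dᶜ.ncard ≤ 3 := by
  by_cases hE : ∃ e : G.edgeSet, Sum.inr e ∈ Dᶜ
  · obtain ⟨⟨e, heG⟩, he⟩ := hE
    induction e using Sym2.ind with | _ u v => ?_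
    rw [mem_edgeSet] at heG
    calc Dᶜ.ncard ≤ (subdividedEdge heG).ncard :=
          Set.ncard_le_ncard (hD.compl_subset_subdividedEdge hdeg heG he)
      _ = 3 := ncard_subdividedEdge heG
  · push Not at hE
    have inl_of_mem : ∀ y ∈ Dᶜ, ∃ w, y = Sum.inl w := by
      rintro (w | e) hy
      · exact ⟨w, rfl⟩
      · exact absurd hy (hE e)
    have hsub : Dᶜ.Subsingleton := by
      refine subsingleton_of_induce_preconnected hD.2.preconnected fun a ha b hb => ?_
      obtain ⟨w, rfl⟩ := inl_of_mem a ha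
      obtain ⟨w', rfl⟩ := inl_of_mem b hb
      exact middleGraph_adj_inl_inl w w'
    have := Set.ncard_le_one_iff_subsingleton.2 hsub
    omega

theorem isTOCDomSet_compl_subdividedEdge {u v : V} (h : G.Adj u v)
    (hother : ∀ w, ∃ f : G.edgeSet, w ∈ (f : Sym2 V) ∧ f ≠ ⟨s(u, v), h⟩) :
    IsTOCDomSet (middleGraph G) (subdividedEdge h)ᶜ := by
  refine ⟨?_, by rw [compl_compl]; exact induce_subdividedEdge_connected h⟩
  have inr_mem : ∀ f : G.edgeSet, f ≠ ⟨s(u, v), h⟩ → Sum.inr f ∈ (subdividedEdge h)ᶜ := by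
    intro f hf
    simpa [subdividedEdge] using hf
  rintro (w | ⟨f, hfG⟩)
  · obtain ⟨f, hwf, hf⟩ := hother w
    exact ⟨_, inr_mem f hf, hwf⟩
  by_cases hf : (⟨f, hfG⟩ : G.edgeSet) = ⟨s(u, v), h⟩
  · obtain ⟨f', huf', hf'⟩ := hother u
    refine ⟨_, inr_mem f' hf', ?_⟩
    rw [hf]
    exact ⟨hf'.symm, u, Sym2.mem_mk_left u v, huf'⟩
  induction f using Sym2.ind with | _ a b => ?_
  have hab : a ≠ b := G.ne_of_adj hfG
  have : (a ≠ u ∧ a ≠ v) ∨ (b ≠ u ∧ b ≠ v) := by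
    have hne : ¬ s(a, b) = s(u, v) := fun heq => hf (Subtype.ext heq)
    rw [Sym2.eq_iff] at hne
    grind
  rcases this with ha | hb
  · exact ⟨Sum.inl a, by simpa [subdividedEdge] using ha, Sym2.mem_mk_left a b⟩
  · exact ⟨Sum.inl b, by simpa [subdividedEdge] using hb, Sym2.mem_mk_right a b⟩

theorem tocDomNum_eq_ncard {W : Type*} {H : SimpleGraph W} {D : Set W} (hD : IsTOCDomSet H D)
    (hmin : ∀ D', IsTOCDomSet H D' → D.ncard ≤ D'.ncard) : tocDomNum H = D.ncard :=
  le_antisymm (Nat.sInf_le ⟨D, hD, rfl⟩) (le_csInf ⟨_, D, hD, rfl⟩ fun _ ⟨D', hD', hk⟩ =>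
    hk ▸ hmin D' hD')

theorem tocDomNum_middleGraph [Finite V] (hdeg : ∀ w, (G.neighborSet w).ncard ≤ 2)
    {u v : V} (h : G.Adj u v)
    (hother : ∀ w, ∃ f : G.edgeSet, w ∈ (f : Sym2 V) ∧ f ≠ ⟨s(u, v), h⟩) :
    tocDomNum (middleGraph G) = Nat.card V + Nat.card G.edgeSet - 3 := by
  have hcompl : ∀ D : Set (V ⊕ G.edgeSet), D.ncard = Nat.card V + Nat.card G.edgeSet - Dᶜ.ncard :=
    fun D => by rw [← Nat.card_sum, ← Set.ncard_add_ncard_compl D, Nat.add_sub_cancel]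
  have hD := isTOCDomSet_compl_subdividedEdge h hother
  rw [tocDomNum_eq_ncard hD, hcompl, compl_compl, ncard_subdividedEdge]
  intro D' hD'
  rw [hcompl (subdividedEdge h)ᶜ, hcompl D', compl_compl, ncard_subdividedEdge]
  have := hD'.ncard_compl_le_three hdeg
  omega

end MiddleGraph

theorem pathGraph_ncard_neighborSet_le_two (n : ℕ) (w : Fin n) :
    ((pathGraph n).neighborSet w).ncard ≤ 2 := by
  by_contra! h
  obtain ⟨a, b, c, ha, hb, hc, hab, hac, hbc⟩ := (Set.two_lt_ncard_iff (Set.toFinite _)).1 h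
  simp only [mem_neighborSet, pathGraph_adj, ne_eq, Fin.ext_iff] at ha hb hc hab hac hbc
  omega

theorem pathGraph_card_edgeSet (n : ℕ) : Nat.card (pathGraph n).edgeSet = n - 1 := by
  rw [← Nat.card_fin (n - 1)]
  symm
  refine Nat.card_eq_of_bijective
    (fun i => ⟨s(⟨i, by omega⟩, ⟨i + 1, by omega⟩), by simp [pathGraph_adj]⟩) ⟨?_, ?_⟩
  · intro i j hij
    simp only [Subtype.mk.injEq, Sym2.eq_iff, Fin.ext_iff] at hij
    omega
  · rintro ⟨e, he⟩
    induction e using Sym2.ind with | _ a b => ?_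
    rw [mem_edgeSet, pathGraph_adj] at he
    rcases he with he | he
    · exact ⟨⟨a, by omega⟩, by simp [Fin.ext_iff]; omega⟩
    · exact ⟨⟨b, by omega⟩, by simp [Fin.ext_iff]; omega⟩

theorem pathGraph_exists_edge_ne {n : ℕ} {u v : Fin n} (h : (pathGraph n).Adj u v)
    (huv : u.val + 1 = v.val) (hu : 0 < u.val) (hv : v.val + 1 < n) (w : Fin n) :
    ∃ f : (pathGraph n).edgeSet, w ∈ (f : Sym2 (Fin n)) ∧ f ≠ ⟨s(u, v), h⟩ := by
  obtain ⟨x, hwx, hne⟩ : ∃ x : Fin n, (pathGraph n).Adj w x ∧ s(w, x) ≠ s(u, v) := by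
    simp only [pathGraph_adj, ne_eq, Sym2.eq_iff, Fin.ext_iff]
    by_cases hwu : w = u
    · exact ⟨⟨u - 1, by omega⟩, by grind⟩
    by_cases hw : w.val + 1 < n
    · exact ⟨⟨w + 1, hw⟩, by grind⟩
    · exact ⟨⟨w - 1, by omega⟩, by grind⟩
  exact ⟨⟨s(w, x), hwx⟩, Sym2.mem_mk_left w x, fun heq => hne (congrArg Subtype.val heq)⟩

theorem stmt10 (n : ℕ) (hn : 4 ≤ n) :
    tocDomNum (middleGraph (SimpleGraph.pathGraph n)) = 2 * n - 4 := by
  have h12 : (pathGraph n).Adj ⟨1, by omega⟩ ⟨2, by omega⟩ := by simp [pathGraph_adj]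
  rw [tocDomNum_middleGraph (pathGraph_ncard_neighborSet_le_two n) h12
    (pathGraph_exists_edge_ne h12 rfl Nat.one_pos (by simp; omega)), Nat.card_fin,
    pathGraph_card_edgeSet]
  omega
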